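/- arXiv:1602.05330 — 2 statements merged into one kernel-verified Lean document; each statement's English description precedes it below -/
import Mathlib

section
/- Suppose A is a σ-algebra and m̄ is null-additive on A. Then the outer set function m̃(E) = inf { m̄(C) : E ⊆ C, C ∈ A } is null-additive on P(T): if m̃(B) = 0 then m̃(A ∪ B) = m̃(A) for all A, B ⊆ T. -/
open Set ENNReal

variable {T : Type*}

/-- `𝒜` is an algebra of subsets of `T`. -/
def IsSetAlgebra' (𝒜 : Set (Set T)) : Prop :=
  ∅ ∈ 𝒜 ∧ (∀ A ∈ 𝒜, Aᶜ ∈ 𝒜) ∧ ∀ A ∈ 𝒜, ∀ B ∈ 𝒜, A ∪ B ∈ 𝒜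

/-- `m` is monotone on `𝒜`. -/
def MonoSF (m : Set T → ℝ) (𝒜 : Set (Set T)) : Prop :=
  ∀ A ∈ 𝒜, ∀ B ∈ 𝒜, A ⊆ B → m A ≤ m B

/-- `m` is subadditive on `𝒜`. -/
def SubaddSF (m : Set T → ℝ) (𝒜 : Set (Set T)) : Prop :=
  ∀ A ∈ 𝒜, ∀ B ∈ 𝒜, m (A ∪ B) ≤ m A + m B

/-- `m` is null-additive on `𝒜`. -/
def NullAddSF (m : Set T → ℝ) (𝒜 : Set (Set T)) : Prop :=
  ∀ A ∈ 𝒜, ∀ B ∈ 𝒜, m B = 0 → m (A ∪ B) = m A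

/-- `m` is finitely additive on `𝒜`. -/
def FinAddSF (m : Set T → ℝ) (𝒜 : Set (Set T)) : Prop :=
  ∀ A ∈ 𝒜, ∀ B ∈ 𝒜, Disjoint A B → m (A ∪ B) = m A + m B

/-- The variation `m̄` of `m`: supremum of `Σᵢ m(Aᵢ)` over finite pairwise disjoint
families `{Aᵢ} ⊆ 𝒜` with each `Aᵢ ⊆ E`. -/
noncomputable def variationSF (m : Set T → ℝ) (𝒜 : Set (Set T)) (E : Set T) : ℝ≥0∞ :=
  ⨆ F ∈ {F : Finset (Set T) |
      (∀ A ∈ F, A ∈ 𝒜 ∧ A ⊆ E) ∧ (F : Set (Set T)).PairwiseDisjoint id},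
    ∑ A ∈ F, ENNReal.ofReal (m A)

/-- `A` is an atom of `m`. -/
def IsAtomOf (m : Set T → ℝ) (𝒜 : Set (Set T)) (A : Set T) : Prop :=
  A ∈ 𝒜 ∧ 0 < m A ∧ ∀ B ∈ 𝒜, B ⊆ A → m B = 0 ∨ m (A \ B) = 0

/-- The outer set function `m̃(E) = inf {m̄(C) : E ⊆ C, C measurable}`. -/
noncomputable def mTilde [MeasurableSpace T] (m : Set T → ℝ) (E : Set T) : ℝ≥0∞ :=
  ⨅ C ∈ {C : Set T | MeasurableSet C ∧ E ⊆ C},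
    variationSF m {s : Set T | MeasurableSet s} C


lemma variationSF_mono (m : Set T → ℝ) (𝒜 : Set (Set T)) {E E' : Set T} (h : E ⊆ E') :
    variationSF m 𝒜 E ≤ variationSF m 𝒜 E' := by
  refine iSup_le fun F => iSup_le fun hF => ?_
  exact le_iSup₂_of_le F ⟨fun A hA => ⟨(hF.1 A hA).1, (hF.1 A hA).2.trans h⟩, hF.2⟩ le_rfl

lemma mTilde_mono [MeasurableSpace T] (m : Set T → ℝ) {A A' : Set T} (h : A ⊆ A') :
    mTilde m A ≤ mTilde m A' := by
  refine le_iInf₂ fun C hC => ?_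
  exact iInf₂_le C ⟨hC.1, h.trans hC.2⟩

/-- If `𝒜` is a σ-algebra and `m̄` is null-additive on `𝒜`, then `m̃` is
null-additive on `𝒫(T)`. -/
theorem mTilde_nullAdditive [MeasurableSpace T] (m : Set T → ℝ)
    (h0 : m ∅ = 0) (hpos : ∀ A : Set T, MeasurableSet A → 0 ≤ m A)
    (hmono : MonoSF m {s : Set T | MeasurableSet s})
    (hvnull : ∀ A B : Set T, MeasurableSet A → MeasurableSet B →
      variationSF m {s : Set T | MeasurableSet s} B = 0 →
      variationSF m {s : Set T | MeasurableSet s} (A ∪ B) =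
        variationSF m {s : Set T | MeasurableSet s} A) :
    ∀ A B : Set T, mTilde m B = 0 → mTilde m (A ∪ B) = mTilde m A := by
  intro A B hB
  -- obtain a measurable cover of `B` with zero variation
  have hex : ∀ n : ℕ, ∃ C : Set T, (MeasurableSet C ∧ B ⊆ C) ∧
      variationSF m {s : Set T | MeasurableSet s} C < ((n : ℝ≥0∞))⁻¹ := by
    intro n
    have hlt : mTilde m B < ((n : ℝ≥0∞))⁻¹ := by
      rw [hB]
      exact ENNReal.inv_pos.mpr (ENNReal.natCast_ne_top n)
    simpa [mTilde, iInf_lt_iff] using hlt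
  choose C hC hCv using hex
  set D : Set T := ⋂ n, C n with hD
  have hDm : MeasurableSet D := MeasurableSet.iInter fun n => (hC n).1
  have hBD : B ⊆ D := subset_iInter fun n => (hC n).2
  have hDv : variationSF m {s : Set T | MeasurableSet s} D = 0 := by
    by_contra h
    obtain ⟨n, hn⟩ := ENNReal.exists_inv_nat_lt h
    exact absurd ((variationSF_mono m _ (iInter_subset C n)).trans_lt (hCv n)) (not_lt.mpr hn.le)
  refine le_antisymm ?_ (mTilde_mono m subset_union_left)
  refine le_iInf₂ fun E hE => ?_
  have h1 : mTilde m (A ∪ B) ≤ variationSF m {s : Set T | MeasurableSet s} (E ∪ D) :=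
    iInf₂_le (E ∪ D) ⟨hE.1.union hDm, union_subset_union hE.2 hBD⟩
  rwa [hvnull E D hE.1 hDm hDv] at h1
end

section
/- If m is a null-additive monotone measure and A ∈ A is an atom of m, then the variation of m on A equals m(A): m̄(A) = m(A). -/
open Set ENNReal

variable {T : Type*}

/-! If one piece `B` of a disjoint family inside the atom `A` has positive mass, every other
piece lies in `A \ B`, which is null, so by monotonicity the whole sum is at most `m B ≤ m A`;
the one-piece family `{A}` attains `m A`. -/

theorem IsSetAlgebra'.diff_mem {𝒜 : Set (Set T)} (halg : IsSetAlgebra' 𝒜) {A B : Set T}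
    (hA : A ∈ 𝒜) (hB : B ∈ 𝒜) : A \ B ∈ 𝒜 := by
  have h : A \ B = (Aᶜ ∪ B)ᶜ := by rw [compl_union, compl_compl, sdiff_eq, inter_comm]
  exact h ▸ halg.2.1 _ (halg.2.2 _ (halg.2.1 _ hA) _ hB)

theorem ofReal_le_variationSF {m : Set T → ℝ} {𝒜 : Set (Set T)} {E : Set T} (hE : E ∈ 𝒜) :
    ENNReal.ofReal (m E) ≤ variationSF m 𝒜 E := by
  have hmem : ({E} : Finset (Set T)) ∈ {F : Finset (Set T) |
      (∀ B ∈ F, B ∈ 𝒜 ∧ B ⊆ E) ∧ (F : Set (Set T)).PairwiseDisjoint id} :=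
    ⟨fun B hB => (Finset.mem_singleton.mp hB).symm ▸ ⟨hE, subset_rfl⟩, by simp⟩
  refine le_trans ?_ (le_iSup₂_of_le {E} hmem le_rfl)
  simp

section Atom

variable {𝒜 : Set (Set T)} {m : Set T → ℝ} {A : Set T}

theorem IsAtomOf.eq_zero_of_disjoint (hA : IsAtomOf m 𝒜 A) (halg : IsSetAlgebra' 𝒜)
    (hpos : ∀ B ∈ 𝒜, 0 ≤ m B) (hmono : MonoSF m 𝒜) {B C : Set T}
    (hB : B ∈ 𝒜) (hBA : B ⊆ A) (hC : C ∈ 𝒜) (hCA : C ⊆ A) (hBC : Disjoint B C)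
    (hmB : m B ≠ 0) : m C = 0 := by
  have hrest : m (A \ B) = 0 := (hA.2.2 B hB hBA).resolve_left hmB
  have hCrest : C ⊆ A \ B := subset_sdiff.mpr ⟨hCA, hBC.symm⟩
  exact le_antisymm
    (hrest ▸ hmono C hC _ (halg.diff_mem hA.1 hB) hCrest) (hpos C hC)

theorem IsAtomOf.sum_ofReal_le (hA : IsAtomOf m 𝒜 A) (halg : IsSetAlgebra' 𝒜)
    (hpos : ∀ B ∈ 𝒜, 0 ≤ m B) (hmono : MonoSF m 𝒜) {F : Finset (Set T)}
    (hF : ∀ B ∈ F, B ∈ 𝒜 ∧ B ⊆ A) (hdisj : (F : Set (Set T)).PairwiseDisjoint id) :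
    ∑ B ∈ F, ENNReal.ofReal (m B) ≤ ENNReal.ofReal (m A) := by
  by_cases hex : ∃ B₀ ∈ F, m B₀ ≠ 0
  · obtain ⟨B₀, hB₀F, hmB₀⟩ := hex
    have hothers : ∀ B ∈ F, B ≠ B₀ → ENNReal.ofReal (m B) = 0 := fun B hBF hne => by
      rw [hA.eq_zero_of_disjoint halg hpos hmono (hF B₀ hB₀F).1 (hF B₀ hB₀F).2
        (hF B hBF).1 (hF B hBF).2 (hdisj hB₀F hBF hne.symm) hmB₀, ofReal_zero]
    rw [Finset.sum_eq_single_of_mem B₀ hB₀F hothers]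
    exact ofReal_le_ofReal (hmono B₀ (hF B₀ hB₀F).1 A hA.1 (hF B₀ hB₀F).2)
  · push Not at hex
    rw [Finset.sum_eq_zero fun B hB => by rw [hex B hB, ofReal_zero]]
    exact zero_le

end Atom

theorem variation_atom_eq_general (𝒜 : Set (Set T)) (m : Set T → ℝ)
    (halg : IsSetAlgebra' 𝒜) (hpos : ∀ A ∈ 𝒜, 0 ≤ m A)
    (hmono : MonoSF m 𝒜)
    (A : Set T) (hA : IsAtomOf m 𝒜 A) :
    variationSF m 𝒜 A = ENNReal.ofReal (m A) :=
  le_antisymm (iSup₂_le fun _ hF => hA.sum_ofReal_le halg hpos hmono hF.1 hF.2)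
    (ofReal_le_variationSF hA.1)

/-- If `m` is null-additive and monotone and `A` is an atom of `m`, then
`m̄(A) = m(A)`. -/
theorem variation_atom_eq (𝒜 : Set (Set T)) (m : Set T → ℝ)
    (halg : IsSetAlgebra' 𝒜) (h0 : m ∅ = 0) (hpos : ∀ A ∈ 𝒜, 0 ≤ m A)
    (hmono : MonoSF m 𝒜) (hnull : NullAddSF m 𝒜)
    (A : Set T) (hA : IsAtomOf m 𝒜 A) :
    variationSF m 𝒜 A = ENNReal.ofReal (m A) :=
  variation_atom_eq_general 𝒜 m halg hpos hmono A hA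
end
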